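/- Let k, a ∈ ℝ with k ≠ 2, and let L : ℝ[X] → ℝ be a linear functional such that L(D_{n,k}·D_{m,k}) = hₙ(k)·δ_{n,m} for all n, m ∈ ℕ, where h₀(k) = 2 − k and hₙ(k) = aⁿ for n ≥ 1. Denote μⱼ = L(Xʲ). Then: (i) μ₀ = 1/(2−k); (ii) μ_{2n+1} = 0 for all n ∈ ℕ; (iii) for all n ≥ 1, μ_{2n} = −Σ_{j=0}^{n−1} (((2−k)·n + k·j)/(j+n))·C(n+j, 2j)·(−a)^{n−j}·μ_{2j}. -/

import Mathlib

/-!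
Orthogonality against the constant `D_{0,k} = 2 - k` gives `L (D_{n,k}) = 0` for `n ≥ 1`. As
`D_{n,k}` is monic of degree `n` with the parity of `n`, this expresses each moment through lower
ones of the same parity, and the odd moments vanish. For the coefficients, write
`D_{n+2,k} = U_{n+2} - (1 - k) a U_n` with `U_n = D_{n,1}` of the second kind (both sides satisfy
the same recurrence) and expand `U_{2n} = ∑ j, C(n+j, 2j) (-a)^(n-j) X^(2j)` by Pascal's rule; the
identity `(n + j) C(n+j-1, 2j) = (n - j) C(n+j, 2j)` then gives the stated coefficient of `X^(2j)`
in `D_{2n,k}`.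
-/

open Polynomial

/-- The Dickson polynomial of the `(k+1)`-th kind with real parameters `k, a`,
as a polynomial in `ℝ[X]`, defined by the three-term recurrence. -/
noncomputable def dicksonP (k a : ℝ) : ℕ → Polynomial ℝ
  | 0 => C (2 - k)
  | 1 => X
  | n + 2 => X * dicksonP k a (n + 1) - C a * dicksonP k a n

open Finset

theorem dicksonP_add_two (k a : ℝ) (n : ℕ) :
    dicksonP k a (n + 2) = X * dicksonP k a (n + 1) - C a * dicksonP k a n := rfl

theorem dicksonP_add_two_eq_sub (k a : ℝ) (n : ℕ) :
    dicksonP k a (n + 2) = dicksonP 1 a (n + 2) - C ((1 - k) * a) * dicksonP 1 a n := by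
  induction n using Nat.twoStepInduction with
  | zero => simp only [dicksonP, map_sub, map_mul, map_one, map_ofNat]; ring
  | one => simp only [dicksonP, map_sub, map_mul, map_one]; ring
  | more n ih₀ ih₁ =>
    rw [dicksonP_add_two k a (n + 2), ih₀, ih₁]
    simp only [dicksonP_add_two 1 a]
    ring

section SecondKind

variable (a : ℝ) (n : ℕ)

def secondKindEvenCoeff (j : ℕ) : ℝ := (n + j).choose (2 * j) * (-a) ^ (n - j)

def secondKindOddCoeff (j : ℕ) : ℝ := (n + j + 1).choose (2 * j + 1) * (-a) ^ (n - j)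

noncomputable def secondKindEven : ℝ[X] :=
  ∑ j ∈ range (n + 1), C (secondKindEvenCoeff a n j) * X ^ (2 * j)

noncomputable def secondKindOdd : ℝ[X] :=
  ∑ j ∈ range (n + 1), C (secondKindOddCoeff a n j) * X ^ (2 * j + 1)

@[simp]
theorem secondKindEvenCoeff_self : secondKindEvenCoeff a n n = 1 := by
  simp [secondKindEvenCoeff, ← two_mul]

@[simp]
theorem secondKindOddCoeff_self : secondKindOddCoeff a n n = 1 := by
  simp [secondKindOddCoeff, ← two_mul]

theorem secondKindEvenCoeff_self_succ : secondKindEvenCoeff a n (n + 1) = 0 := by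
  simp [secondKindEvenCoeff, Nat.choose_eq_zero_of_lt (by omega : n + (n + 1) < 2 * (n + 1))]

theorem secondKindOddCoeff_self_succ : secondKindOddCoeff a n (n + 1) = 0 := by
  simp [secondKindOddCoeff,
    Nat.choose_eq_zero_of_lt (by omega : n + (n + 1) + 1 < 2 * (n + 1) + 1)]

theorem secondKindEvenCoeff_succ_zero :
    secondKindEvenCoeff a (n + 1) 0 = -a * secondKindEvenCoeff a n 0 := by
  simp [secondKindEvenCoeff, pow_succ]
  ring

/- In this and the next lemma, once `j` is past the range of the expansion the binomial
coefficients vanish, which absorbs the truncated subtraction in the exponent of `-a`. -/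
theorem secondKindEvenCoeff_succ_succ (j : ℕ) :
    secondKindEvenCoeff a (n + 1) (j + 1) =
      secondKindOddCoeff a n j - a * secondKindEvenCoeff a n (j + 1) := by
  have hpascal := Nat.choose_succ_succ' (n + (j + 1)) (2 * j + 1)
  rw [show n + (j + 1) + 1 = n + 1 + (j + 1) by omega, show 2 * j + 1 + 1 = 2 * (j + 1) by omega]
    at hpascal
  rcases lt_or_ge j n with hj | hj
  · simp only [secondKindEvenCoeff, secondKindOddCoeff, hpascal, Nat.cast_add, pow_succ,
      show n + 1 - (j + 1) = n - (j + 1) + 1 by omega, show n - j = n - (j + 1) + 1 by omega,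
      show n + j + 1 = n + (j + 1) by omega]
    ring
  · simp only [secondKindEvenCoeff, secondKindOddCoeff, hpascal, Nat.cast_add,
      Nat.choose_eq_zero_of_lt (by omega : n + (j + 1) < 2 * (j + 1)),
      show n + 1 - (j + 1) = n - j by omega, show n + j + 1 = n + (j + 1) by omega]
    ring

theorem secondKindOddCoeff_succ (j : ℕ) :
    secondKindOddCoeff a (n + 1) j =
      secondKindEvenCoeff a (n + 1) j - a * secondKindOddCoeff a n j := by
  have hpascal := Nat.choose_succ_succ' (n + 1 + j) (2 * j)
  rw [show n + 1 + j = n + j + 1 by omega] at hpascal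
  rcases le_or_gt j n with hj | hj
  · simp only [secondKindEvenCoeff, secondKindOddCoeff, hpascal, Nat.cast_add, pow_succ,
      show n + 1 - j = n - j + 1 by omega, show n + 1 + j = n + j + 1 by omega]
    ring
  · simp only [secondKindEvenCoeff, secondKindOddCoeff, hpascal, Nat.cast_add,
      Nat.choose_eq_zero_of_lt (by omega : n + j + 1 < 2 * j + 1),
      show n + 1 + j = n + j + 1 by omega]
    ring

theorem secondKindEven_succ :
    secondKindEven a (n + 1) = X * secondKindOdd a n - C a * secondKindEven a n := by
  have hpad :
      secondKindEven a n =
        ∑ j ∈ range (n + 2), C (secondKindEvenCoeff a n j) * X ^ (2 * j) := by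
    rw [sum_range_succ, secondKindEvenCoeff_self_succ, map_zero, zero_mul, add_zero, secondKindEven]
  have hterm :
      ∑ j ∈ range (n + 1), C (secondKindEvenCoeff a (n + 1) (j + 1)) * X ^ (2 * (j + 1)) =
      ∑ j ∈ range (n + 1), (X * (C (secondKindOddCoeff a n j) * X ^ (2 * j + 1)) -
        C a * (C (secondKindEvenCoeff a n (j + 1)) * X ^ (2 * (j + 1)))) :=
    sum_congr rfl fun j _ ↦ by rw [secondKindEvenCoeff_succ_succ, map_sub, map_mul]; ring
  rw [hpad, secondKindEven,
    sum_range_succ' (fun j ↦ C (secondKindEvenCoeff a (n + 1) j) * X ^ (2 * j)),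
    sum_range_succ' (fun j ↦ C (secondKindEvenCoeff a n j) * X ^ (2 * j)), hterm, sum_sub_distrib,
    secondKindOdd, mul_add, mul_sum, mul_sum, secondKindEvenCoeff_succ_zero, map_mul, map_neg]
  ring

theorem secondKindOdd_succ :
    secondKindOdd a (n + 1) = X * secondKindEven a (n + 1) - C a * secondKindOdd a n := by
  have hpad :
      secondKindOdd a n =
        ∑ j ∈ range (n + 2), C (secondKindOddCoeff a n j) * X ^ (2 * j + 1) := by
    rw [sum_range_succ, secondKindOddCoeff_self_succ, map_zero, zero_mul, add_zero, secondKindOdd]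
  rw [secondKindOdd, secondKindEven, hpad]
  simp only [secondKindOddCoeff_succ, map_sub, map_mul, sub_mul, sum_sub_distrib, mul_sum]
  congr 1 <;> exact sum_congr rfl fun j _ ↦ by ring

theorem dicksonP_one_two_mul_and_two_mul_add_one :
    dicksonP 1 a (2 * n) = secondKindEven a n ∧ dicksonP 1 a (2 * n + 1) = secondKindOdd a n := by
  induction n with
  | zero => norm_num [dicksonP, secondKindEven, secondKindOdd]
  | succ n ih =>
    have heven : dicksonP 1 a (2 * (n + 1)) = secondKindEven a (n + 1) := by
      rw [secondKindEven_succ, ← ih.1, ← ih.2]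
      rfl
    refine ⟨heven, ?_⟩
    rw [secondKindOdd_succ, ← heven, ← ih.2]
    rfl

end SecondKind

theorem secondKindEvenCoeff_succ_sub (k a : ℝ) {m j : ℕ} (hj : j ≤ m) :
    secondKindEvenCoeff a (m + 1) j - (1 - k) * a * secondKindEvenCoeff a m j =
      ((2 - k) * ((m + 1 : ℕ) : ℝ) + k * j) / ((j : ℝ) + ((m + 1 : ℕ) : ℝ)) *
        (m + 1 + j).choose (2 * j) * (-a) ^ (m + 1 - j) := by
  have hchoose : ((m + j).choose (2 * j) : ℝ) * (m + j + 1) =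
      (m + 1 + j).choose (2 * j) * (m + 1 - j) := by
    have h := congrArg (Nat.cast : ℕ → ℝ) (Nat.choose_mul_succ_eq (m + j) (2 * j))
    rw [show m + j + 1 = m + 1 + j by omega, show m + 1 + j - 2 * j = m + 1 - j by omega] at h
    push_cast [Nat.cast_sub (show j ≤ m + 1 by omega)] at h
    linear_combination h
  simp only [secondKindEvenCoeff, show m + 1 - j = m - j + 1 by omega, pow_succ]
  have hpos : (j : ℝ) + ((m + 1 : ℕ) : ℝ) ≠ 0 := by positivity
  field_simp
  push_cast at hpos ⊢
  linear_combination (1 - k) * (-a) ^ (m - j) * (-a) * hchoose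

theorem dicksonP_two_mul (k a : ℝ) {n : ℕ} (hn : n ≠ 0) :
    dicksonP k a (2 * n) = X ^ (2 * n) + ∑ j ∈ range n,
      C ((((2 - k) * n + k * j) / ((j : ℝ) + n)) * (n + j).choose (2 * j) * (-a) ^ (n - j)) *
        X ^ (2 * j) := by
  obtain ⟨m, rfl⟩ := Nat.exists_eq_add_one_of_ne_zero hn
  have hterm : ∀ j ∈ range (m + 1),
      C ((((2 - k) * ((m + 1 : ℕ) : ℝ) + k * j) / ((j : ℝ) + ((m + 1 : ℕ) : ℝ))) *
        (m + 1 + j).choose (2 * j) * (-a) ^ (m + 1 - j)) * X ^ (2 * j) =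
      C (secondKindEvenCoeff a (m + 1) j) * X ^ (2 * j) -
        C ((1 - k) * a) * (C (secondKindEvenCoeff a m j) * X ^ (2 * j)) := fun j hj ↦ by
    rw [← secondKindEvenCoeff_succ_sub k a (mem_range_succ_iff.mp hj), map_sub, map_mul]
    ring
  rw [sum_congr rfl hterm, sum_sub_distrib, ← mul_sum, show 2 * (m + 1) = 2 * m + 2 by ring,
    dicksonP_add_two_eq_sub, ← show 2 * (m + 1) = 2 * m + 2 by ring,
    (dicksonP_one_two_mul_and_two_mul_add_one a (m + 1)).1,
    (dicksonP_one_two_mul_and_two_mul_add_one a m).1, secondKindEven, sum_range_succ,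
    secondKindEvenCoeff_self, secondKindEven]
  simp only [map_one, one_mul]
  ring

theorem dicksonP_two_mul_add_one (k a : ℝ) (n : ℕ) :
    ∃ c : ℕ → ℝ,
      dicksonP k a (2 * n + 1) =
        X ^ (2 * n + 1) + ∑ j ∈ range n, C (c j) * X ^ (2 * j + 1) := by
  cases n with
  | zero => exact ⟨0, by simp [dicksonP]⟩
  | succ m =>
    refine ⟨fun j ↦ secondKindOddCoeff a (m + 1) j - (1 - k) * a * secondKindOddCoeff a m j,
      ?_⟩
    rw [show 2 * (m + 1) + 1 = 2 * m + 1 + 2 by ring, dicksonP_add_two_eq_sub,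
      ← show 2 * (m + 1) + 1 = 2 * m + 1 + 2 by ring,
      (dicksonP_one_two_mul_and_two_mul_add_one a (m + 1)).2,
      (dicksonP_one_two_mul_and_two_mul_add_one a m).2, secondKindOdd, sum_range_succ,
      secondKindOddCoeff_self, secondKindOdd, mul_sum]
    rw [map_one, one_mul, add_sub_right_comm, ← sum_sub_distrib, add_comm]
    exact congrArg _ (sum_congr rfl fun j _ ↦ by simp only [map_sub, map_mul]; ring)

theorem map_X_pow_two_mul_add_one_eq_zero {k a : ℝ} (L : ℝ[X] →ₗ[ℝ] ℝ)
    (hD : ∀ n ≠ 0, L (dicksonP k a n) = 0) (n : ℕ) : L (X ^ (2 * n + 1)) = 0 := by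
  induction n using Nat.strong_induction_on with
  | _ n ih =>
    obtain ⟨c, hc⟩ := dicksonP_two_mul_add_one k a n
    have h := hD (2 * n + 1) (by omega)
    rwa [hc, map_add, map_sum, sum_eq_zero fun j hj ↦ by
      rw [C_mul', map_smul, ih j (mem_range.mp hj), smul_zero], add_zero] at h

theorem map_X_pow_two_mul_eq {k a : ℝ} (L : ℝ[X] →ₗ[ℝ] ℝ)
    (hD : ∀ n ≠ 0, L (dicksonP k a n) = 0) {n : ℕ} (hn : n ≠ 0) :
    L (X ^ (2 * n)) = -∑ j ∈ range n,
      (((2 - k) * n + k * j) / ((j : ℝ) + n)) * (n + j).choose (2 * j) * (-a) ^ (n - j) *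
        L (X ^ (2 * j)) := by
  have h := hD (2 * n) (by omega)
  rw [dicksonP_two_mul k a hn, map_add, map_sum] at h
  simp only [C_mul', map_smul, smul_eq_mul] at h
  linarith

theorem dickson_moments_recurrence (k a : ℝ) (hk : k ≠ 2)
    (L : Polynomial ℝ →ₗ[ℝ] ℝ)
    (hL : ∀ n m : ℕ, L (dicksonP k a n * dicksonP k a m) =
      if n = m then (if n = 0 then 2 - k else a ^ n) else 0) :
    L (X ^ 0) = 1 / (2 - k) ∧
    (∀ n : ℕ, L (X ^ (2 * n + 1)) = 0) ∧
    (∀ n : ℕ, 1 ≤ n →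
      L (X ^ (2 * n)) =
        -∑ j ∈ Finset.range n,
          (((2 - k) * n + k * j) / ((j : ℝ) + n)) * (Nat.choose (n + j) (2 * j)) *
            (-a) ^ (n - j) * L (X ^ (2 * j))) := by
  have h2k : (2 : ℝ) - k ≠ 0 := sub_ne_zero.mpr hk.symm
  have hD0 (n : ℕ) : L (dicksonP k a n * dicksonP k a 0) = (2 - k) * L (dicksonP k a n) := by
    rw [dicksonP, mul_comm, C_mul', map_smul, smul_eq_mul]
  have hμ0 : L (X ^ 0) = 1 / (2 - k) := by
    have h := hL 0 0
    rw [hD0, if_pos rfl, if_pos rfl, dicksonP, ← mul_one (C (2 - k)), C_mul', map_smul,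
      smul_eq_mul] at h
    rw [pow_zero, eq_div_iff h2k, mul_comm]
    exact mul_left_cancel₀ h2k (by linear_combination h)
  have hD : ∀ n ≠ 0, L (dicksonP k a n) = 0 := fun n hn ↦ by
    simpa [hD0, hn, h2k] using hL n 0
  exact ⟨hμ0, map_X_pow_two_mul_add_one_eq_zero L hD,
    fun n hn ↦ map_X_pow_two_mul_eq L hD (Nat.one_le_iff_ne_zero.mp hn)⟩
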